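/- arXiv:2502.20559 — 7 statements merged into one kernel-verified Lean document; each statement's English description precedes it below -/
import Mathlib

section
/- Consider a commutative square of topological abelian groups with injective continuous homomorphisms f : A → B, g : A' → B', α : A → A', β : B → B' satisfying g ∘ α = β ∘ f. If f, g and β are strict, then α is strict. -/
open Topology

/-- A map between topological spaces is *strict* if it sends open sets to
sets that are open in the image with the subspace topology. -/
def IsStrictMap {A B : Type*} [TopologicalSpace A] [TopologicalSpace B] (f : A → B) : Prop :=
  ∀ U : Set A, IsOpen U → ∃ V : Set B, IsOpen V ∧ f '' U = V ∩ Set.range f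

/-- In a commutative square of injective continuous homomorphisms of topological
abelian groups, if `f`, `g` and `β` are strict then so is `α`. -/
theorem strict_of_commSq {A B A' B' : Type*}
    [AddCommGroup A] [TopologicalSpace A] [IsTopologicalAddGroup A]
    [AddCommGroup B] [TopologicalSpace B] [IsTopologicalAddGroup B]
    [AddCommGroup A'] [TopologicalSpace A'] [IsTopologicalAddGroup A']
    [AddCommGroup B'] [TopologicalSpace B'] [IsTopologicalAddGroup B']
    (f : A →+ B) (g : A' →+ B') (α : A →+ A') (β : B →+ B')
    (hf : Continuous f) (hg : Continuous g) (hα : Continuous α) (hβ : Continuous β)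
    (hfi : Function.Injective f) (hgi : Function.Injective g)
    (hαi : Function.Injective α) (hβi : Function.Injective β)
    (hcomm : ∀ a : A, g (α a) = β (f a))
    (hfs : _root_.IsStrictMap f) (hgs : _root_.IsStrictMap g) (hβs : _root_.IsStrictMap β) :
    _root_.IsStrictMap α := by
  intro U hU
  obtain ⟨W, hW, hfU⟩ := hfs U hU
  obtain ⟨W', hW', hβW⟩ := hβs W hW
  refine ⟨g ⁻¹' W', hW'.preimage hg, ?_⟩
  ext a'
  constructor
  · rintro ⟨a, ha, rfl⟩
    refine ⟨?_, a, rfl⟩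
    have hfa : f a ∈ W ∩ Set.range f := by rw [← hfU]; exact ⟨a, ha, rfl⟩
    have : β (f a) ∈ W' ∩ Set.range β := by rw [← hβW]; exact ⟨f a, hfa.1, rfl⟩
    simpa [hcomm a] using this.1
  · rintro ⟨hgW', a, rfl⟩
    have hβfa : β (f a) ∈ W' ∩ Set.range β := by
      refine ⟨?_, f a, rfl⟩
      simpa [hcomm a] using hgW'
    rw [← hβW] at hβfa
    obtain ⟨b, hb, hb'⟩ := hβfa
    have hfa : f a ∈ W ∩ Set.range f := ⟨(hβi hb') ▸ hb, a, rfl⟩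
    rw [← hfU] at hfa
    obtain ⟨u, hu, hu'⟩ := hfa
    exact ⟨a, (hfi hu') ▸ hu, rfl⟩
end

section
/- Let 0 → A → G → B → 0 be a topological extension of abelian topological groups. If A and B are first-countable, then G is first-countable. -/
open Topology

/-- Auxiliary: given a sequence of neighborhoods of `0`, there is a sequence of symmetric open
neighborhoods `V n` of `0` with `V n + V n ⊆ S n` and `V (n+1) + V (n+1) ⊆ V n`. -/
lemma aux_seq_of_nhds {G : Type*} [AddCommGroup G] [TopologicalSpace G] [IsTopologicalAddGroup G]
    (S : ℕ → Set G) (hS : ∀ n, S n ∈ 𝓝 (0 : G)) :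
    ∃ V : ℕ → Set G, ∀ n, IsOpen (V n) ∧ (0 : G) ∈ V n ∧ (∀ x ∈ V n, -x ∈ V n) ∧
      (∀ x ∈ V n, ∀ y ∈ V n, x + y ∈ S n) ∧
      ∀ x ∈ V (n + 1), ∀ y ∈ V (n + 1), x + y ∈ V n := by
  have step : ∀ T : Set G, T ∈ 𝓝 (0 : G) → ∃ W : Set G, IsOpen W ∧ (0 : G) ∈ W ∧
      (∀ x ∈ W, -x ∈ W) ∧ ∀ x ∈ W, ∀ y ∈ W, x + y ∈ T := by
    intro T hT
    obtain ⟨U, hUo, hU0, hUsum⟩ := exists_open_nhds_zero_half hT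
    refine ⟨U ∩ (-U), hUo.inter hUo.neg, ⟨hU0, by simpa using hU0⟩, ?_, ?_⟩
    · rintro x ⟨hx, hx'⟩
      exact ⟨by simpa using hx', by simpa using hx⟩
    · rintro x ⟨hx, -⟩ y ⟨hy, -⟩
      exact hUsum x hx y hy
  choose! W hWo hW0 hWsym hWsum using step
  set V : ℕ → Set G := fun n => Nat.rec (W (S 0)) (fun n Vn => W (Vn ∩ S (n + 1))) n with hV
  have hVmem : ∀ n, IsOpen (V n) ∧ (0 : G) ∈ V n := by
    intro n
    induction n with
    | zero => exact ⟨hWo _ (hS 0), hW0 _ (hS 0)⟩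
    | succ n ih =>
        have hmem : V n ∩ S (n + 1) ∈ 𝓝 (0 : G) :=
          Filter.inter_mem (ih.1.mem_nhds ih.2) (hS (n + 1))
        exact ⟨hWo _ hmem, hW0 _ hmem⟩
  refine ⟨V, fun n => ?_⟩
  refine ⟨(hVmem n).1, (hVmem n).2, ?_, ?_, ?_⟩
  · cases n with
    | zero => exact hWsym _ (hS 0)
    | succ n =>
        exact hWsym _ (Filter.inter_mem ((hVmem n).1.mem_nhds (hVmem n).2) (hS (n + 1)))
  · cases n with
    | zero => exact hWsum _ (hS 0)
    | succ n =>
        intro x hx y hy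
        exact (hWsum _ (Filter.inter_mem ((hVmem n).1.mem_nhds (hVmem n).2) (hS (n + 1)))
          x hx y hy).2
  · intro x hx y hy
    exact (hWsum _ (Filter.inter_mem ((hVmem n).1.mem_nhds (hVmem n).2) (hS (n + 1)))
      x hx y hy).1

/-- If `0 → A → G → B → 0` is a topological extension of abelian topological groups
with `A` and `B` first countable, then `G` is first countable. -/
theorem firstCountable_of_topological_extension {A G B : Type*}
    [AddCommGroup A] [TopologicalSpace A] [IsTopologicalAddGroup A]
    [AddCommGroup G] [TopologicalSpace G] [IsTopologicalAddGroup G]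
    [AddCommGroup B] [TopologicalSpace B] [IsTopologicalAddGroup B]
    (ι : A →+ G) (π : G →+ B)
    (hιinj : Function.Injective ι) (hπsurj : Function.Surjective π)
    (hexact : ∀ g : G, π g = 0 ↔ g ∈ Set.range ι)
    (hιemb : IsInducing ι) (hπcont : Continuous π) (hπopen : IsOpenMap π)
    [FirstCountableTopology A] [FirstCountableTopology B] :
    FirstCountableTopology G := by
  obtain ⟨P, hP⟩ := (𝓝 (0 : A)).exists_antitone_basis
  obtain ⟨Q, hQ⟩ := (𝓝 (0 : B)).exists_antitone_basis
  -- choose S n ∈ 𝓝 0 in G with ι ⁻¹' (S n) ⊆ P n, using that ι is inducing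
  have hcomap : 𝓝 (0 : A) = Filter.comap ι (𝓝 (0 : G)) := by
    simpa [map_zero] using hιemb.nhds_eq_comap (0 : A)
  have hSex : ∀ n, ∃ S ∈ 𝓝 (0 : G), ι ⁻¹' S ⊆ P n := by
    intro n
    have h1 : P n ∈ Filter.comap ι (𝓝 (0 : G)) := hcomap ▸ hP.1.mem_of_mem trivial
    exact Filter.mem_comap.mp h1
  choose S hS hSP using hSex
  obtain ⟨V, hV⟩ := aux_seq_of_nhds S hS
  -- the candidate countable basis of 𝓝 0 in G
  have hbasis : (𝓝 (0 : G)).HasBasis (fun _ : ℕ × ℕ => True)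
      (fun p => V (p.1 + 1) ∩ π ⁻¹' Q p.2) := by
    constructor
    intro t
    constructor
    · intro ht
      -- main argument
      obtain ⟨V', hV'o, hV'0, hV'sym, hV'sum⟩ : ∃ V' : Set G, IsOpen V' ∧ (0 : G) ∈ V' ∧
          (∀ x ∈ V', -x ∈ V') ∧ ∀ x ∈ V', ∀ y ∈ V', x + y ∈ t := by
        obtain ⟨U, hUo, hU0, hUsum⟩ := exists_open_nhds_zero_half ht
        refine ⟨U ∩ (-U), hUo.inter hUo.neg, ⟨hU0, by simpa using hU0⟩, ?_, ?_⟩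
        · rintro x ⟨hx, hx'⟩
          exact ⟨by simpa using hx', by simpa using hx⟩
        · rintro x ⟨hx, -⟩ y ⟨hy, -⟩
          exact hUsum x hx y hy
      -- choose n with ι '' (P n) ⊆ V'
      have hpre : ι ⁻¹' V' ∈ 𝓝 (0 : A) := by
        have h0 : Filter.Tendsto ι (𝓝 (0 : A)) (𝓝 (0 : G)) := by
          simpa [ContinuousAt, map_zero] using hιemb.continuous.continuousAt (x := (0 : A))
        exact h0 (hV'o.mem_nhds hV'0)
      obtain ⟨n, -, hPn⟩ := hP.1.mem_iff.mp hpre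
      -- choose m with Q m ⊆ π '' (V (n+1) ∩ V')
      have hWopen : IsOpen (V (n + 1) ∩ V') := (hV (n + 1)).1.inter hV'o
      have hW0 : (0 : G) ∈ V (n + 1) ∩ V' := ⟨(hV (n + 1)).2.1, hV'0⟩
      have himg : π '' (V (n + 1) ∩ V') ∈ 𝓝 (0 : B) := by
        exact (hπopen _ hWopen).mem_nhds ⟨0, hW0, map_zero π⟩
      obtain ⟨m, -, hQm⟩ := hQ.1.mem_iff.mp himg
      refine ⟨(n, m), trivial, ?_⟩
      rintro g ⟨hg1, hg2⟩
      obtain ⟨h, ⟨hh1, hh2⟩, hπh⟩ := hQm hg2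
      -- g - h is in the kernel, hence of the form ι a with ι a ∈ V'
      have hker : π (g - h) = 0 := by
        simp [map_sub, hπh]
      obtain ⟨a, ha⟩ := (hexact _).mp hker
      have hdiff : g - h ∈ S n := by
        have hnegh : -h ∈ V (n + 1) := (hV (n + 1)).2.2.1 h hh1
        have : g + (-h) ∈ V n := (hV n).2.2.2.2 g hg1 (-h) hnegh
        have h2 : (g + -h) + 0 ∈ S n := (hV n).2.2.2.1 _ this 0 (hV n).2.1
        simpa [sub_eq_add_neg] using h2
      have haV' : ι a ∈ V' := by
        have : a ∈ P n := hSP n (by simpa [ha] using hdiff)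
        exact hPn this
      have : (g - h) + h ∈ t := hV'sum _ (ha ▸ haV') h hh2
      simpa using this
    · rintro ⟨⟨n, m⟩, -, hsub⟩
      refine Filter.mem_of_superset ?_ hsub
      refine Filter.inter_mem ((hV (n + 1)).1.mem_nhds (hV (n + 1)).2.1) ?_
      have h0 : Filter.Tendsto π (𝓝 (0 : G)) (𝓝 (0 : B)) := by
        simpa [ContinuousAt, map_zero] using hπcont.continuousAt (x := (0 : G))
      exact h0 (hQ.1.mem_of_mem (i := m) trivial)
  have hcg : (𝓝 (0 : G)).IsCountablyGenerated := hbasis.isCountablyGenerated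
  refine ⟨fun g => ?_⟩
  have h : Filter.map (fun y => g + y) (𝓝 (0 : G)) = 𝓝 g := by
    simpa using (Homeomorph.addLeft g).map_nhds_eq (0 : G)
  rw [← h]
  exact Filter.map.isCountablyGenerated _ _
end

section
/- Let 0 → A → G → B → 0 be a topological extension of abelian topological groups. If A and B are locally compact (the identity has a neighborhood basis of compact sets), then G is locally compact. -/
open Topology Filter Set Pointwise

/-- If `0 → A → G → B → 0` is a topological extension of abelian topological groups
with `A` and `B` locally compact, then `G` is locally compact. -/
theorem locallyCompact_of_topological_extension {A G B : Type*}
    [AddCommGroup A] [TopologicalSpace A] [IsTopologicalAddGroup A]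
    [AddCommGroup G] [TopologicalSpace G] [IsTopologicalAddGroup G]
    [AddCommGroup B] [TopologicalSpace B] [IsTopologicalAddGroup B]
    (ι : A →+ G) (π : G →+ B)
    (hιinj : Function.Injective ι) (hπsurj : Function.Surjective π)
    (hexact : ∀ g : G, π g = 0 ↔ g ∈ Set.range ι)
    (hιemb : IsInducing ι) (hπcont : Continuous π) (hπopen : IsOpenMap π)
    [LocallyCompactSpace A] [LocallyCompactSpace B] :
    LocallyCompactSpace G := by
  -- a compact neighborhood of 0 in A
  obtain ⟨K, hKmem, -, hKcomp⟩ :=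
    local_compact_nhds (x := (0 : A)) (n := Set.univ) Filter.univ_mem
  -- pull back to a neighborhood W of 0 in G
  have hnhds : 𝓝 (0 : A) = Filter.comap ι (𝓝 (ι 0)) := hιemb.nhds_eq_comap 0
  rw [map_zero] at hnhds
  obtain ⟨W, hWmem, hWK⟩ : ∃ W ∈ 𝓝 (0 : G), ι ⁻¹' W ⊆ K := by
    rw [hnhds, Filter.mem_comap] at hKmem; exact hKmem
  -- a small symmetric neighborhood V of 0 in G
  obtain ⟨V₁, hV₁mem, hV₁⟩ := exists_nhds_zero_half hWmem
  obtain ⟨V₂, hV₂mem, hV₂⟩ := exists_nhds_zero_half hV₁mem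
  set V : Set G := V₂ ∩ (-V₂) with hVdef
  have hVmem : V ∈ 𝓝 (0 : G) := by
    refine Filter.inter_mem hV₂mem ?_
    simpa using neg_mem_nhds_zero G hV₂mem
  have hVV₂ : ∀ x ∈ V, x ∈ V₂ := fun x hx => hx.1
  have hVneg : ∀ x ∈ V, -x ∈ V₂ := fun x hx => hx.2
  have hP : ∀ a ∈ V, ∀ b ∈ V, ∀ c ∈ V, ∀ d ∈ V, a + b - c - d ∈ W := by
    intro a ha b hb c hc d hd
    have h1 : a + b ∈ V₁ := hV₂ a (hVV₂ a ha) b (hVV₂ b hb)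
    have h2 : -c + -d ∈ V₁ := hV₂ (-c) (hVneg c hc) (-d) (hVneg d hd)
    have := hV₁ _ h1 _ h2
    convert this using 1
    abel
  -- points of the closure of V are sums of two elements of V
  have hclV : ∀ y ∈ closure V, ∃ p ∈ V, ∃ q ∈ V, y = p + q := by
    intro y hy
    have hU : (fun z : G => y - z) ⁻¹' V ∈ 𝓝 y := by
      have hc : Continuous fun z : G => y - z := continuous_const.sub continuous_id
      refine hc.continuousAt.preimage_mem_nhds ?_
      simpa using hVmem
    rcases mem_closure_iff_nhds.1 hy _ hU with ⟨q, hq1, hq2⟩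
    exact ⟨y - q, hq1, q, hq2, by abel⟩
  -- a closed compact neighborhood L of 0 in B inside π '' V
  have hπV : π '' V ∈ 𝓝 (0 : B) := by
    have := hπopen.image_mem_nhds hVmem
    rwa [map_zero] at this
  obtain ⟨L₀, hL₀mem, hL₀sub, hL₀comp⟩ :=
    local_compact_nhds (x := (0 : B)) hπV
  obtain ⟨L, hLmem, hLclosed, hLsub⟩ := exists_mem_nhds_isClosed_subset hL₀mem
  have hLcomp : IsCompact L := hL₀comp.of_isClosed_subset hLclosed hLsub
  have hLV : L ⊆ π '' V := hLsub.trans hL₀sub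
  -- the candidate compact neighborhood of 0 in G
  set C : Set G := closure V ∩ π ⁻¹' L with hCdef
  have hCmem : C ∈ 𝓝 (0 : G) := by
    refine Filter.inter_mem (Filter.mem_of_superset hVmem subset_closure) ?_
    refine hπcont.continuousAt.preimage_mem_nhds ?_
    rwa [map_zero]
  have hCclosed : IsClosed C := isClosed_closure.inter (hLclosed.preimage hπcont)
  have hιKcomp : IsCompact (ι '' K) := hKcomp.image hιemb.continuous
  have hCcomp : IsCompact C := by
    rw [isCompact_iff_ultrafilter_le_nhds]
    intro f hf
    have hCf : C ∈ f := le_principal_iff.1 hf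
    -- the image ultrafilter converges to some b ∈ L
    have hmapL : ↑(f.map π) ≤ 𝓟 L := by
      rw [le_principal_iff, Ultrafilter.coe_map, Filter.mem_map]
      exact Filter.mem_of_superset hCf fun y hy => hy.2
    obtain ⟨b, hbL, hbconv⟩ := hLcomp.ultrafilter_le_nhds (f.map π) hmapL
    obtain ⟨g, hgV, hgb⟩ := hLV hbL
    -- Claim A: the set of points of the form g + v + ι a is in f
    have claimA : ∀ V' ∈ 𝓝 (0 : G),
        {y : G | ∃ v ∈ V' ∩ V, ∃ a ∈ K, y = g + v + ι a} ∈ f := by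
      intro V' hV'mem
      have hV''mem : V' ∩ V ∈ 𝓝 (0 : G) := Filter.inter_mem hV'mem hVmem
      set T₀ : Set G := (fun z : G => z - g) ⁻¹' (V' ∩ V) with hT₀def
      have hT₀mem : T₀ ∈ 𝓝 g := by
        have hc : Continuous fun z : G => z - g := continuous_id.sub continuous_const
        refine hc.continuousAt.preimage_mem_nhds ?_
        simpa using hV''mem
      have hπT₀ : π '' T₀ ∈ 𝓝 b := by
        have := hπopen.image_mem_nhds hT₀mem
        rwa [hgb] at this
      have hpre : π ⁻¹' (π '' T₀) ∈ f := hbconv hπT₀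
      refine Filter.mem_of_superset (Filter.inter_mem hpre hCf) ?_
      rintro y ⟨hy1, hy2⟩
      rcases hy1 with ⟨z, hz, hπz⟩
      have hv : z - g ∈ V' ∩ V := hz
      have hker : y - z ∈ Set.range ι := by
        rw [← hexact]
        simp [map_sub, hπz]
      rcases hker with ⟨a, ha⟩
      have hιaW : ι a ∈ W := by
        rcases hclV y hy2.1 with ⟨p, hp, q, hq, hyeq⟩
        have : ι a = p + q - g - (z - g) := by rw [ha, ← hyeq]; abel
        rw [this]
        exact hP p hp q hq g hgV (z - g) hv.2
      have haK : a ∈ K := hWK hιaW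
      exact ⟨z - g, hv, a, haK, by rw [ha]; abel⟩
    -- translated ultrafilter
    set f' : Ultrafilter G := f.map (fun y => y - g) with hf'def
    have claimB : ∀ V' ∈ 𝓝 (0 : G),
        {x : G | ∃ v ∈ V', ∃ a ∈ K, x = v + ι a} ∈ f' := by
      intro V' hV'mem
      have : (fun y : G => y - g) ⁻¹' {x : G | ∃ v ∈ V', ∃ a ∈ K, x = v + ι a} ∈ f := by
        refine Filter.mem_of_superset (claimA V' hV'mem) ?_
        rintro y ⟨v, hv, a, ha, rfl⟩
        exact ⟨v, hv.1, a, ha, by abel⟩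
      exact this
    -- f' has a cluster point in ι '' K
    have hcluster : ∃ x₀ ∈ ι '' K, ClusterPt x₀ ↑f' := by
      by_contra h
      push_neg at h
      have hdisj : Disjoint (𝓝ˢ (ι '' K)) ↑f' := by
        rw [hιKcomp.disjoint_nhdsSet_left]
        intro x hx
        have := h x hx
        rwa [clusterPt_iff_not_disjoint, not_not] at this
      rcases Filter.disjoint_iff.1 hdisj with ⟨s, hs, t, ht, hst⟩
      have hsint : ι '' K ⊆ interior s := subset_interior_iff_mem_nhdsSet.2 hs
      obtain ⟨V', hV'mem, hV'sub⟩ :=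
        compact_open_separated_add_right hιKcomp isOpen_interior hsint
      have hSsub : {x : G | ∃ v ∈ V', ∃ a ∈ K, x = v + ι a} ⊆ s := by
        rintro x ⟨v, hv, a, ha, rfl⟩
        have : v + ι a ∈ ι '' K + V' := ⟨ι a, ⟨a, ha, rfl⟩, v, hv, by abel⟩
        exact interior_subset (hV'sub this)
      have h1 : {x : G | ∃ v ∈ V', ∃ a ∈ K, x = v + ι a} ∩ t ∈ f' :=
        Filter.inter_mem (claimB V' hV'mem) ht
      have h2 : {x : G | ∃ v ∈ V', ∃ a ∈ K, x = v + ι a} ∩ t = ∅ := by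
        apply Set.eq_empty_of_forall_notMem
        rintro x ⟨hx1, hx2⟩
        exact Set.disjoint_left.1 hst (hSsub hx1) hx2
      rw [h2] at h1
      exact f'.neBot.ne (Filter.empty_mem_iff_bot.1 h1)
    obtain ⟨x₀, hx₀K, hx₀cl⟩ := hcluster
    have hf'le : ↑f' ≤ 𝓝 x₀ := Ultrafilter.clusterPt_iff.1 hx₀cl
    -- translate back
    have hfle : ↑f ≤ 𝓝 (x₀ + g) := by
      have heq : Filter.map (fun x : G => x + g) ↑f' = ↑f := by
        rw [hf'def]
        simp only [Ultrafilter.coe_map, Filter.map_map]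
        have : ((fun x : G => x + g) ∘ fun y : G => y - g) = id := by
          funext y; simp
        rw [this, Filter.map_id]
      have hmap : Filter.map (fun x : G => x + g) (𝓝 x₀) = 𝓝 (x₀ + g) :=
        (Homeomorph.addRight g).map_nhds_eq x₀
      calc ↑f = Filter.map (fun x : G => x + g) ↑f' := heq.symm
        _ ≤ Filter.map (fun x : G => x + g) (𝓝 x₀) := Filter.map_mono hf'le
        _ = 𝓝 (x₀ + g) := hmap
    have hxC : x₀ + g ∈ C := by
      have : ClusterPt (x₀ + g) (𝓟 C) := by
        refine ClusterPt.mono ?_ hf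
        exact ClusterPt.of_le_nhds hfle
      rw [← hCclosed.closure_eq]
      exact mem_closure_iff_clusterPt.2 this
    exact ⟨x₀ + g, hxC, hfle⟩
  exact hCcomp.locallyCompactSpace_of_mem_nhds_of_addGroup hCmem
end

section
/- Let 0 → A →ι G →π B → 0 be a topological extension of locally compact abelian topological groups with A Hausdorff and compact. Then the induced sequence on universal Hausdorff quotients 0 → A → G_Haus → B_Haus → 0 is again a topological extension; in particular the composite A → G → G_Haus is a closed embedding with kernel trivial. -/
open Topology Pointwise

/-- Given a topological extension `0 → A → G → B → 0` of locally compact abelian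
topological groups with `A` Hausdorff and compact, the induced sequence
`0 → A → G_Haus → B_Haus → 0` on universal Hausdorff quotients is again a topological
extension; in particular the composite `A → G → G_Haus` is a closed embedding with
trivial kernel. -/
theorem hausdorffification_extension {A G B : Type*}
    [AddCommGroup A] [TopologicalSpace A] [IsTopologicalAddGroup A]
    [AddCommGroup G] [TopologicalSpace G] [IsTopologicalAddGroup G]
    [AddCommGroup B] [TopologicalSpace B] [IsTopologicalAddGroup B]
    [LocallyCompactSpace A] [LocallyCompactSpace G] [LocallyCompactSpace B]
    [T2Space A] [CompactSpace A]
    (ι : A →+ G) (π : G →+ B)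
    (hιinj : Function.Injective ι) (hπsurj : Function.Surjective π)
    (hexact : ∀ g : G, π g = 0 ↔ g ∈ Set.range ι)
    (hιcont : Continuous ι) (hιemb : IsInducing ι)
    (hπcont : Continuous π) (hπopen : IsOpenMap π)
    (hmap : (⊥ : AddSubgroup G).topologicalClosure ≤
      AddSubgroup.comap π (⊥ : AddSubgroup B).topologicalClosure) :
    IsClosedEmbedding
        ((QuotientAddGroup.mk' (⊥ : AddSubgroup G).topologicalClosure).comp ι) ∧
      (∀ a : A,
        (QuotientAddGroup.mk' (⊥ : AddSubgroup G).topologicalClosure).comp ι a = 0 → a = 0) ∧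
      Continuous (QuotientAddGroup.map (⊥ : AddSubgroup G).topologicalClosure
        (⊥ : AddSubgroup B).topologicalClosure π hmap) ∧
      IsOpenMap (QuotientAddGroup.map (⊥ : AddSubgroup G).topologicalClosure
        (⊥ : AddSubgroup B).topologicalClosure π hmap) ∧
      Function.Surjective (QuotientAddGroup.map (⊥ : AddSubgroup G).topologicalClosure
        (⊥ : AddSubgroup B).topologicalClosure π hmap) ∧
      (∀ x : G ⧸ (⊥ : AddSubgroup G).topologicalClosure,
        QuotientAddGroup.map (⊥ : AddSubgroup G).topologicalClosure
          (⊥ : AddSubgroup B).topologicalClosure π hmap x = 0 ↔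
        x ∈ Set.range ((QuotientAddGroup.mk' (⊥ : AddSubgroup G).topologicalClosure).comp ι)) := by
  have hNset : ((⊥ : AddSubgroup G).topologicalClosure : Set G) = closure {0} := by
    simp [AddSubgroup.topologicalClosure]
  have hMset : ((⊥ : AddSubgroup B).topologicalClosure : Set B) = closure {0} := by
    simp [AddSubgroup.topologicalClosure]
  haveI : IsClosed (((⊥ : AddSubgroup G).topologicalClosure : Set G)) :=
    (⊥ : AddSubgroup G).isClosed_topologicalClosure
  have key : ∀ c : A, ι c ∈ ((⊥ : AddSubgroup G).topologicalClosure : Set G) → c = 0 := by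
    intro c hc
    have hcl := hιemb.closure_eq_preimage_closure_image ({0} : Set A)
    have h0 : ι '' {0} = {(0 : G)} := by simp
    rw [h0] at hcl
    have : c ∈ closure ({0} : Set A) := by
      rw [hcl]
      exact Set.mem_preimage.mpr (by rwa [hNset] at hc)
    simpa using this
  have hinj : Function.Injective
      ((QuotientAddGroup.mk' (⊥ : AddSubgroup G).topologicalClosure).comp ι) := by
    intro a b hab
    simp only [AddMonoidHom.comp_apply, QuotientAddGroup.mk'_apply,
      QuotientAddGroup.eq_iff_sub_mem] at hab
    have h1 : ι (a - b) ∈ ((⊥ : AddSubgroup G).topologicalClosure : Set G) := by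
      rwa [map_sub]
    exact sub_eq_zero.mp (key _ h1)
  have hcompcont : Continuous
      ((QuotientAddGroup.mk' (⊥ : AddSubgroup G).topologicalClosure).comp ι) :=
    (continuous_quot_mk).comp hιcont
  refine ⟨hcompcont.isClosedEmbedding hinj, ?_, ?_, ?_, ?_, ?_⟩
  · intro a ha
    exact hinj (by simpa using ha)
  · refine (QuotientAddGroup.isQuotientMap_mk
      (⊥ : AddSubgroup G).topologicalClosure).continuous_iff.mpr ?_
    have heq : (QuotientAddGroup.map (⊥ : AddSubgroup G).topologicalClosure
        (⊥ : AddSubgroup B).topologicalClosure π hmap) ∘ (QuotientAddGroup.mk) = fun g =>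
        (QuotientAddGroup.mk (π g) : B ⧸ (⊥ : AddSubgroup B).topologicalClosure) := by
      funext g; exact QuotientAddGroup.map_mk _ _ π hmap g
    rw [heq]
    exact continuous_quot_mk.comp hπcont
  · intro U hU
    have hU' : IsOpen ((QuotientAddGroup.mk :
        G → G ⧸ (⊥ : AddSubgroup G).topologicalClosure) ⁻¹' U) :=
      continuous_quot_mk.isOpen_preimage U hU
    have himg : QuotientAddGroup.map (⊥ : AddSubgroup G).topologicalClosure
        (⊥ : AddSubgroup B).topologicalClosure π hmap '' U =
        (QuotientAddGroup.mk : B → B ⧸ (⊥ : AddSubgroup B).topologicalClosure) ''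
          (π '' ((QuotientAddGroup.mk :
            G → G ⧸ (⊥ : AddSubgroup G).topologicalClosure) ⁻¹' U)) := by
      ext y
      constructor
      · rintro ⟨x, hx, rfl⟩
        obtain ⟨g, rfl⟩ := QuotientAddGroup.mk_surjective x
        exact ⟨π g, ⟨g, hx, rfl⟩, (QuotientAddGroup.map_mk _ _ π hmap g).symm⟩
      · rintro ⟨b, ⟨g, hg, rfl⟩, rfl⟩
        exact ⟨QuotientAddGroup.mk g, hg, QuotientAddGroup.map_mk _ _ π hmap g⟩
    rw [himg]
    exact (QuotientAddGroup.isOpenMap_coe) _ (hπopen _ hU')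
  · intro y
    obtain ⟨b, rfl⟩ := QuotientAddGroup.mk_surjective y
    obtain ⟨g, rfl⟩ := hπsurj b
    exact ⟨QuotientAddGroup.mk g, QuotientAddGroup.map_mk _ _ π hmap g⟩
  · intro x
    constructor
    · intro hx
      obtain ⟨g, rfl⟩ := QuotientAddGroup.mk_surjective x
      rw [QuotientAddGroup.map_mk _ _ π hmap g, QuotientAddGroup.eq_zero_iff] at hx
      have hg : g ∈ closure (Set.range ι) := by
        have h1 : g ∈ π ⁻¹' closure ({0} : Set B) := by
          have := hx
          rw [← SetLike.mem_coe, hMset] at this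
          exact this
        have h2 : π ⁻¹' closure ({0} : Set B) ⊆ closure (π ⁻¹' {0}) :=
          hπopen.preimage_closure_subset_closure_preimage
        have h3 : π ⁻¹' ({0} : Set B) = Set.range ι := by
          ext g'; simpa using hexact g'
        rw [h3] at h2
        exact h2 h1
      have hcomp : IsCompact (Set.range ι) := isCompact_range hιcont
      have hdecomp : closure (Set.range ι) = Set.range ι + closure ({0} : Set G) :=
        (hcomp.add_closure_zero_eq_closure).symm
      rw [hdecomp] at hg
      obtain ⟨u, hu, z, hz, rfl⟩ := Set.mem_add.mp hg
      obtain ⟨a, rfl⟩ := hu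
      refine ⟨a, ?_⟩
      simp only [AddMonoidHom.comp_apply, QuotientAddGroup.mk'_apply]
      rw [QuotientAddGroup.eq_iff_sub_mem]
      have heq2 : ι a - (ι a + z) = -z := by abel
      rw [heq2]
      refine neg_mem ?_
      rw [← SetLike.mem_coe, hNset]
      exact hz
    · rintro ⟨a, rfl⟩
      simp only [AddMonoidHom.comp_apply, QuotientAddGroup.mk'_apply]
      rw [QuotientAddGroup.map_mk _ _ π hmap (ι a)]
      have h0 : π (ι a) = 0 := (hexact (ι a)).mpr ⟨a, rfl⟩
      rw [h0, QuotientAddGroup.eq_zero_iff]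
      exact zero_mem _
end

section
/- (Topologizing functoriality) Let two topological extensions E_i : 0 → A_i → G_i →π_i B_i → 0 (i = 1,2) of first-countable abelian topological groups be given, where G_i carries the topology induced by a topologizing section s_i of π_i, together with a commutative diagram with vertical homomorphisms α : A_1 → A_2, γ : G_1 → G_2, β : B_1 → B_2. Assume the compatibility γ ∘ s_1 = s_2 ∘ β. Then γ is continuous if and only if α and β are continuous. -/
open Topology

/-- Functoriality of Nagao topologies: given a commutative diagram of extensions of
first-countable abelian topological groups, where each `Gᵢ` carries the topology
induced by a topologizing section `sᵢ`, and assuming `γ ∘ s₁ = s₂ ∘ β`, the middle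
map `γ` is continuous iff `α` and `β` are continuous. -/
theorem nagao_functoriality {A₁ B₁ A₂ B₂ G₁ G₂ : Type*}
    [AddCommGroup A₁] [TopologicalSpace A₁] [IsTopologicalAddGroup A₁] [FirstCountableTopology A₁]
    [AddCommGroup B₁] [TopologicalSpace B₁] [IsTopologicalAddGroup B₁] [FirstCountableTopology B₁]
    [AddCommGroup A₂] [TopologicalSpace A₂] [IsTopologicalAddGroup A₂] [FirstCountableTopology A₂]
    [AddCommGroup B₂] [TopologicalSpace B₂] [IsTopologicalAddGroup B₂] [FirstCountableTopology B₂]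
    [AddCommGroup G₁] [TopologicalSpace G₁] [IsTopologicalAddGroup G₁]
    [AddCommGroup G₂] [TopologicalSpace G₂] [IsTopologicalAddGroup G₂]
    (ι₁ : A₁ →+ G₁) (π₁ : G₁ →+ B₁) (ι₂ : A₂ →+ G₂) (π₂ : G₂ →+ B₂)
    (hι₁ : Function.Injective ι₁) (hπ₁ : Function.Surjective π₁)
    (hexact₁ : ∀ g : G₁, π₁ g = 0 ↔ g ∈ Set.range ι₁)
    (hι₂ : Function.Injective ι₂) (hπ₂ : Function.Surjective π₂)
    (hexact₂ : ∀ g : G₂, π₂ g = 0 ↔ g ∈ Set.range ι₂)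
    (s₁ : B₁ → G₁) (hs₁ : ∀ b, π₁ (s₁ b) = b) (hs₁0 : s₁ 0 = 0)
    (s₂ : B₂ → G₂) (hs₂ : ∀ b, π₂ (s₂ b) = b) (hs₂0 : s₂ 0 = 0)
    -- the topology of Gᵢ is the Nagao topology τ_{Eᵢ,sᵢ} induced by the
    -- topologizing section sᵢ: a set is a neighborhood of 0 iff it contains a
    -- twisted product θ_{sᵢ}(U × V) of neighborhoods of zero
    (hG₁ : ∀ W : Set G₁, W ∈ 𝓝 (0 : G₁) ↔ ∃ U ∈ 𝓝 (0 : A₁), ∃ V ∈ 𝓝 (0 : B₁),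
      (fun p : A₁ × B₁ => ι₁ p.1 + s₁ p.2) '' (U ×ˢ V) ⊆ W)
    (hG₂ : ∀ W : Set G₂, W ∈ 𝓝 (0 : G₂) ↔ ∃ U ∈ 𝓝 (0 : A₂), ∃ V ∈ 𝓝 (0 : B₂),
      (fun p : A₂ × B₂ => ι₂ p.1 + s₂ p.2) '' (U ×ˢ V) ⊆ W)
    (α : A₁ →+ A₂) (γ : G₁ →+ G₂) (β : B₁ →+ B₂)
    (hcommι : ∀ a : A₁, γ (ι₁ a) = ι₂ (α a))
    (hcommπ : ∀ g : G₁, π₂ (γ g) = β (π₁ g))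
    (hcs : ∀ b : B₁, γ (s₁ b) = s₂ (β b)) :
    Continuous γ ↔ Continuous α ∧ Continuous β := by
  have hπι₂ : ∀ a : A₂, π₂ (ι₂ a) = 0 := fun a => (hexact₂ (ι₂ a)).2 ⟨a, rfl⟩
  constructor
  · intro hγ
    have hγ0 : ∀ S ∈ 𝓝 (0 : G₂), γ ⁻¹' S ∈ 𝓝 (0 : G₁) := fun S hS =>
      hγ.continuousAt.preimage_mem_nhds (by rwa [map_zero])
    constructor
    · apply continuous_of_continuousAt_zero α
      rw [ContinuousAt, map_zero, Filter.tendsto_def]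
      intro W hW
      -- S := θ₂(W × univ) ∈ 𝓝 0
      have hS : (fun p : A₂ × B₂ => ι₂ p.1 + s₂ p.2) '' (W ×ˢ Set.univ) ∈ 𝓝 (0 : G₂) := by
        rw [hG₂]
        exact ⟨W, hW, Set.univ, Filter.univ_mem, le_refl _⟩
      have hpre := hγ0 _ hS
      rw [hG₁] at hpre
      obtain ⟨U₁, hU₁, V₁, hV₁, hUV⟩ := hpre
      refine Filter.mem_of_superset hU₁ ?_
      intro u hu
      have hmem : ι₁ u ∈ γ ⁻¹' ((fun p : A₂ × B₂ => ι₂ p.1 + s₂ p.2) '' (W ×ˢ Set.univ)) := by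
        apply hUV
        refine ⟨(u, 0), ⟨hu, mem_of_mem_nhds hV₁⟩, ?_⟩
        simp [hs₁0]
      obtain ⟨⟨w, v⟩, ⟨hw, -⟩, heq⟩ := hmem
      simp only at heq
      rw [hcommι] at heq
      have hv : v = 0 := by
        have := congrArg π₂ heq
        simpa [hπι₂, hs₂] using this
      subst hv
      rw [hs₂0, add_zero] at heq
      have : α u = w := hι₂ heq.symm
      show α u ∈ W
      rwa [this]
    · apply continuous_of_continuousAt_zero β
      rw [ContinuousAt, map_zero, Filter.tendsto_def]
      intro W hW
      have hS : (fun p : A₂ × B₂ => ι₂ p.1 + s₂ p.2) '' (Set.univ ×ˢ W) ∈ 𝓝 (0 : G₂) := by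
        rw [hG₂]
        exact ⟨Set.univ, Filter.univ_mem, W, hW, le_refl _⟩
      have hpre := hγ0 _ hS
      rw [hG₁] at hpre
      obtain ⟨U₁, hU₁, V₁, hV₁, hUV⟩ := hpre
      refine Filter.mem_of_superset hV₁ ?_
      intro v hv
      have hmem : s₁ v ∈ γ ⁻¹' ((fun p : A₂ × B₂ => ι₂ p.1 + s₂ p.2) '' (Set.univ ×ˢ W)) := by
        apply hUV
        refine ⟨(0, v), ⟨mem_of_mem_nhds hU₁, hv⟩, ?_⟩
        simp
      obtain ⟨⟨w, v'⟩, ⟨-, hv'⟩, heq⟩ := hmem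
      simp only at heq
      rw [hcs] at heq
      have : β v = v' := by
        have := congrArg π₂ heq
        simpa [hπι₂, hs₂] using this.symm
      show β v ∈ W
      rwa [this]
  · rintro ⟨hα, hβ⟩
    apply continuous_of_continuousAt_zero γ
    rw [ContinuousAt, map_zero, Filter.tendsto_def]
    intro W hW
    rw [hG₂] at hW
    obtain ⟨U₂, hU₂, V₂, hV₂, hUV⟩ := hW
    rw [hG₁]
    refine ⟨α ⁻¹' U₂, ?_, β ⁻¹' V₂, ?_, ?_⟩
    · exact hα.continuousAt.preimage_mem_nhds (by rwa [map_zero])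
    · exact hβ.continuousAt.preimage_mem_nhds (by rwa [map_zero])
    · rintro g ⟨⟨u, v⟩, ⟨hu, hv⟩, rfl⟩
      apply hUV
      exact ⟨(α u, β v), ⟨hu, hv⟩, by simp [hcommι, hcs]⟩
end

section
/- Let E_i : 0 → A_i →ι_i G_i →π_i B_i → 0 (i = 1,2) be a commutative diagram of abelian group extensions, with A_i, B_i first-countable abelian topological groups, α : A_1 → A_2 and β : B_1 → B_2 continuous homomorphisms, and γ : G_1 → G_2 a homomorphism making the diagram commute. For topologizing sections s_i of π_i, equip G_i with τ_{E_i,s_i}. If the map σ : B_1 → A_2, b ↦ ι_2^{-1}(γ(s_1(b)) − s_2(β(b))), is continuous at 0, then γ is continuous. -/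
open Topology

/-- Given a commutative diagram of extensions of first-countable abelian topological
groups with Nagao topologies on `Gᵢ` and continuous `α`, `β`: if the defect map
`σ : B₁ → A₂`, `ι₂ (σ b) = γ (s₁ b) - s₂ (β b)`, is continuous at `0`, then `γ` is
continuous. -/
theorem continuity_from_compatible_sections {A₁ B₁ A₂ B₂ G₁ G₂ : Type*}
    [AddCommGroup A₁] [TopologicalSpace A₁] [IsTopologicalAddGroup A₁] [FirstCountableTopology A₁]
    [AddCommGroup B₁] [TopologicalSpace B₁] [IsTopologicalAddGroup B₁] [FirstCountableTopology B₁]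
    [AddCommGroup A₂] [TopologicalSpace A₂] [IsTopologicalAddGroup A₂] [FirstCountableTopology A₂]
    [AddCommGroup B₂] [TopologicalSpace B₂] [IsTopologicalAddGroup B₂] [FirstCountableTopology B₂]
    [AddCommGroup G₁] [TopologicalSpace G₁] [IsTopologicalAddGroup G₁]
    [AddCommGroup G₂] [TopologicalSpace G₂] [IsTopologicalAddGroup G₂]
    (ι₁ : A₁ →+ G₁) (π₁ : G₁ →+ B₁) (ι₂ : A₂ →+ G₂) (π₂ : G₂ →+ B₂)
    (hι₁ : Function.Injective ι₁) (hπ₁ : Function.Surjective π₁)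
    (hexact₁ : ∀ g : G₁, π₁ g = 0 ↔ g ∈ Set.range ι₁)
    (hι₂ : Function.Injective ι₂) (hπ₂ : Function.Surjective π₂)
    (hexact₂ : ∀ g : G₂, π₂ g = 0 ↔ g ∈ Set.range ι₂)
    (s₁ : B₁ → G₁) (hs₁ : ∀ b, π₁ (s₁ b) = b) (hs₁0 : s₁ 0 = 0)
    (s₂ : B₂ → G₂) (hs₂ : ∀ b, π₂ (s₂ b) = b) (hs₂0 : s₂ 0 = 0)
    -- the topology of Gᵢ is the Nagao topology τ_{Eᵢ,sᵢ} induced by the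
    -- topologizing section sᵢ: a set is a neighborhood of 0 iff it contains a
    -- twisted product θ_{sᵢ}(U × V) of neighborhoods of zero
    (hG₁ : ∀ W : Set G₁, W ∈ 𝓝 (0 : G₁) ↔ ∃ U ∈ 𝓝 (0 : A₁), ∃ V ∈ 𝓝 (0 : B₁),
      (fun p : A₁ × B₁ => ι₁ p.1 + s₁ p.2) '' (U ×ˢ V) ⊆ W)
    (hG₂ : ∀ W : Set G₂, W ∈ 𝓝 (0 : G₂) ↔ ∃ U ∈ 𝓝 (0 : A₂), ∃ V ∈ 𝓝 (0 : B₂),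
      (fun p : A₂ × B₂ => ι₂ p.1 + s₂ p.2) '' (U ×ˢ V) ⊆ W)
    (α : A₁ →+ A₂) (γ : G₁ →+ G₂) (β : B₁ →+ B₂)
    (hcommι : ∀ a : A₁, γ (ι₁ a) = ι₂ (α a))
    (hcommπ : ∀ g : G₁, π₂ (γ g) = β (π₁ g))
    (hα : Continuous α) (hβ : Continuous β)
    (σ : B₁ → A₂) (hσdef : ∀ b : B₁, ι₂ (σ b) = γ (s₁ b) - s₂ (β b))
    (hσ : ContinuousAt σ 0) :
    Continuous γ := by
  have hσ0 : σ 0 = 0 := by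
    apply hι₂
    simp [hσdef, hs₁0, hs₂0]
  apply continuous_of_continuousAt_zero γ
  intro W hW
  rw [map_zero] at hW
  obtain ⟨U₂, hU₂, V₂, hV₂, hsub⟩ := (hG₂ W).mp hW
  obtain ⟨U₂', hU₂', hhalf⟩ := exists_nhds_zero_half hU₂
  have hU₁ : α ⁻¹' U₂' ∈ 𝓝 (0 : A₁) := by
    have := hα.continuousAt (x := (0 : A₁))
    exact this (by rwa [map_zero])
  have hV₁ : σ ⁻¹' U₂' ∩ β ⁻¹' V₂ ∈ 𝓝 (0 : B₁) := by
    refine Filter.inter_mem ?_ ?_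
    · exact hσ (by rwa [hσ0])
    · exact hβ.continuousAt (x := (0 : B₁)) (by rwa [map_zero])
  rw [Filter.mem_map]
  rw [hG₁ (γ ⁻¹' W)]
  refine ⟨_, hU₁, _, hV₁, ?_⟩
  rintro g ⟨⟨a, b⟩, ⟨ha, hb, hbV⟩, rfl⟩
  have key : γ (ι₁ a + s₁ b) = ι₂ (α a + σ b) + s₂ (β b) := by
    have := hσdef b
    rw [map_add, hcommι, map_add]
    rw [this]
    abel
  apply hsub
  refine ⟨(α a + σ b, β b), ⟨hhalf _ ha _ hb, hbV⟩, key.symm⟩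
end

section
/- (Topological Five-Lemma, discrete case) Let a commutative diagram of abelian groups with exact rows A_i → B_i → C_i → D_i → E_i (i = 1,2) be given, where all rows are strict exact sequences of locally compact abelian topological groups, B_i and D_i are first countable, β : B_1 → B_2 and δ : D_1 → D_2 are topological isomorphisms, ε : E_1 → E_2 is injective, α : A_1 → A_2 is surjective, and D_1, D_2 are discrete. Then the middle map γ : C_1 → C_2 (a priori only a group homomorphism) descends to a continuous surjective homomorphism on universal Hausdorff quotients γ_Haus : C_1/cl({0}) → C_2/cl({0}); if moreover C_2 is Hausdorff, then γ itself is a continuous bijection. -/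
open Topology

/-- A map between topological spaces is *strict* if it sends open sets to
sets that are open in the image with the subspace topology. -/
def IsStrictMapAux {A B : Type*} [TopologicalSpace A] [TopologicalSpace B] (f : A → B) : Prop :=
  ∀ U : Set A, IsOpen U → ∃ V : Set B, IsOpen V ∧ f '' U = V ∩ Set.range f

/-- Topological Five-Lemma (discrete case). Given a commutative diagram of abelian
groups whose rows are strict exact sequences of locally compact abelian topological
groups `Aᵢ → Bᵢ → Cᵢ → Dᵢ → Eᵢ`, with `Bᵢ`, `Dᵢ` first countable, `β`, `δ` topological
isomorphisms, `ε` injective and continuous, `α` surjective and continuous, and `Dᵢ`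
discrete: the middle homomorphism `γ` descends to a continuous surjective homomorphism
`γ_Haus` on universal Hausdorff quotients, and if `C₂` is Hausdorff then `γ` itself is a
continuous bijection. -/
theorem topological_five_lemma_discrete
    {A₁ B₁ C₁ D₁ E₁ A₂ B₂ C₂ D₂ E₂ : Type*}
    [AddCommGroup A₁] [TopologicalSpace A₁] [IsTopologicalAddGroup A₁] [LocallyCompactSpace A₁]
    [AddCommGroup B₁] [TopologicalSpace B₁] [IsTopologicalAddGroup B₁] [LocallyCompactSpace B₁]
    [FirstCountableTopology B₁]
    [AddCommGroup C₁] [TopologicalSpace C₁] [IsTopologicalAddGroup C₁] [LocallyCompactSpace C₁]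
    [AddCommGroup D₁] [TopologicalSpace D₁] [IsTopologicalAddGroup D₁] [LocallyCompactSpace D₁]
    [FirstCountableTopology D₁] [DiscreteTopology D₁]
    [AddCommGroup E₁] [TopologicalSpace E₁] [IsTopologicalAddGroup E₁] [LocallyCompactSpace E₁]
    [AddCommGroup A₂] [TopologicalSpace A₂] [IsTopologicalAddGroup A₂] [LocallyCompactSpace A₂]
    [AddCommGroup B₂] [TopologicalSpace B₂] [IsTopologicalAddGroup B₂] [LocallyCompactSpace B₂]
    [FirstCountableTopology B₂]
    [AddCommGroup C₂] [TopologicalSpace C₂] [IsTopologicalAddGroup C₂] [LocallyCompactSpace C₂]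
    [AddCommGroup D₂] [TopologicalSpace D₂] [IsTopologicalAddGroup D₂] [LocallyCompactSpace D₂]
    [FirstCountableTopology D₂] [DiscreteTopology D₂]
    [AddCommGroup E₂] [TopologicalSpace E₂] [IsTopologicalAddGroup E₂] [LocallyCompactSpace E₂]
    -- the rows
    (f₁ : A₁ →+ B₁) (g₁ : B₁ →+ C₁) (h₁ : C₁ →+ D₁) (k₁ : D₁ →+ E₁)
    (f₂ : A₂ →+ B₂) (g₂ : B₂ →+ C₂) (h₂ : C₂ →+ D₂) (k₂ : D₂ →+ E₂)
    -- rows are strict exact sequences of continuous maps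
    (hf₁c : Continuous f₁) (hg₁c : Continuous g₁) (hh₁c : Continuous h₁) (hk₁c : Continuous k₁)
    (hf₂c : Continuous f₂) (hg₂c : Continuous g₂) (hh₂c : Continuous h₂) (hk₂c : Continuous k₂)
    (hf₁s : IsStrictMapAux f₁) (hg₁s : IsStrictMapAux g₁) (hh₁s : IsStrictMapAux h₁) (hk₁s : IsStrictMapAux k₁)
    (hf₂s : IsStrictMapAux f₂) (hg₂s : IsStrictMapAux g₂) (hh₂s : IsStrictMapAux h₂) (hk₂s : IsStrictMapAux k₂)
    (hex₁B : ∀ b : B₁, g₁ b = 0 ↔ b ∈ Set.range f₁)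
    (hex₁C : ∀ c : C₁, h₁ c = 0 ↔ c ∈ Set.range g₁)
    (hex₁D : ∀ d : D₁, k₁ d = 0 ↔ d ∈ Set.range h₁)
    (hex₂B : ∀ b : B₂, g₂ b = 0 ↔ b ∈ Set.range f₂)
    (hex₂C : ∀ c : C₂, h₂ c = 0 ↔ c ∈ Set.range g₂)
    (hex₂D : ∀ d : D₂, k₂ d = 0 ↔ d ∈ Set.range h₂)
    -- the vertical maps
    (α : A₁ →+ A₂) (β : B₁ →+ B₂) (γ : C₁ →+ C₂) (δ : D₁ →+ D₂) (ε : E₁ →+ E₂)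
    (hαc : Continuous α) (hαsurj : Function.Surjective α)
    (hβc : Continuous β) (hβbij : Function.Bijective β)
    (hβopen : IsOpenMap β)  -- β is a topological isomorphism
    (hδc : Continuous δ) (hδbij : Function.Bijective δ)
    (hδopen : IsOpenMap δ)  -- δ is a topological isomorphism
    (hεc : Continuous ε) (hεinj : Function.Injective ε)
    -- commutativity of the diagram
    (hsq₁ : ∀ a : A₁, f₂ (α a) = β (f₁ a))
    (hsq₂ : ∀ b : B₁, g₂ (β b) = γ (g₁ b))
    (hsq₃ : ∀ c : C₁, h₂ (γ c) = δ (h₁ c))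
    (hsq₄ : ∀ d : D₁, k₂ (δ d) = ε (k₁ d)) :
    (∃ γH : C₁ ⧸ (⊥ : AddSubgroup C₁).topologicalClosure →+
        C₂ ⧸ (⊥ : AddSubgroup C₂).topologicalClosure,
      (∀ c : C₁, γH (QuotientAddGroup.mk c) = QuotientAddGroup.mk (γ c)) ∧
      Continuous γH ∧ Function.Surjective γH) ∧
    (T2Space C₂ → Continuous γ ∧ Function.Bijective γ) := by
  -- range g₁ is open, since it equals ker h₁ and D₁ is discrete
  have hrange_open : IsOpen (Set.range g₁) := by
    have h0 : IsOpen ((h₁ : C₁ → D₁) ⁻¹' {0}) := (isOpen_discrete _).preimage hh₁c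
    have : (h₁ : C₁ → D₁) ⁻¹' {0} = Set.range g₁ := by
      ext c
      simpa using hex₁C c
    rwa [this] at h0
  -- continuity of γ
  have hγc : Continuous γ := by
    apply continuous_of_continuousAt_zero γ
    rw [ContinuousAt, map_zero]
    intro W hW
    obtain ⟨W', hW'sub, hW'open, hW'0⟩ := mem_nhds_iff.mp hW
    set U : Set B₁ := (fun b => g₂ (β b)) ⁻¹' W' with hU
    have hUopen : IsOpen U := hW'open.preimage (hg₂c.comp hβc)
    obtain ⟨V, hVopen, hVeq⟩ := hg₁s U hUopen
    have hmem : g₁ '' U ∈ 𝓝 (0 : C₁) := by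
      rw [hVeq]
      refine (hVopen.inter hrange_open).mem_nhds ?_
      rw [← hVeq]
      exact ⟨0, by simp [hU, hW'0], map_zero _⟩
    rw [Filter.mem_map]
    refine Filter.mem_of_superset hmem ?_
    rintro c ⟨u, hu, rfl⟩
    have : γ (g₁ u) = g₂ (β u) := (hsq₂ u).symm
    exact hW'sub (by simpa [this, hU] using hu)
  -- γ is injective (diagram chase)
  have hγinj : Function.Injective γ := by
    intro c c' hcc'
    have hγ0 : γ (c - c') = 0 := by simp [map_sub, hcc']
    set x := c - c' with hx
    have hh : δ (h₁ x) = 0 := by rw [← hsq₃, hγ0, map_zero]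
    have hx0 : h₁ x = 0 := by
      have := hδbij.1 (by rw [hh, map_zero] : δ (h₁ x) = δ 0)
      exact this
    obtain ⟨b, hb⟩ := (hex₁C x).mp hx0
    have hg2 : g₂ (β b) = 0 := by rw [hsq₂, hb, hγ0]
    obtain ⟨a₂, ha₂⟩ := (hex₂B (β b)).mp hg2
    obtain ⟨a, rfl⟩ := hαsurj a₂
    have hbf : β b = β (f₁ a) := by rw [← ha₂, hsq₁]
    have : b = f₁ a := hβbij.1 hbf
    have : g₁ b = 0 := (hex₁B b).mpr ⟨a, this.symm⟩
    have hx0' : x = 0 := by rw [← hb, this]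
    have := sub_eq_zero.mp (hx ▸ hx0')
    exact this
  -- γ is surjective (diagram chase)
  have hγsurj : Function.Surjective γ := by
    intro c₂
    obtain ⟨d₁, hd₁⟩ := hδbij.2 (h₂ c₂)
    have hk : ε (k₁ d₁) = 0 := by
      rw [← hsq₄, hd₁]
      exact (hex₂D (h₂ c₂)).mpr ⟨c₂, rfl⟩
    have hk0 : k₁ d₁ = 0 := hεinj (by rw [hk, map_zero])
    obtain ⟨c₁, hc₁⟩ := (hex₁D d₁).mp hk0
    have hmatch : h₂ (c₂ - γ c₁) = 0 := by
      rw [map_sub, hsq₃, hc₁, hd₁, sub_self]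
    obtain ⟨b₂, hb₂⟩ := (hex₂C _).mp hmatch
    obtain ⟨b₁, rfl⟩ := hβbij.2 b₂
    refine ⟨c₁ + g₁ b₁, ?_⟩
    rw [map_add, ← hsq₂, hb₂]
    abel
  constructor
  · -- the descended map on Hausdorff quotients
    set N₁ := (⊥ : AddSubgroup C₁).topologicalClosure with hN₁
    set N₂ := (⊥ : AddSubgroup C₂).topologicalClosure with hN₂
    set φ : C₁ →+ C₂ ⧸ N₂ := (QuotientAddGroup.mk' N₂).comp γ with hφ
    have hker : N₁ ≤ φ.ker := by
      intro c hc
      have hc' : c ∈ closure (((⊥ : AddSubgroup C₁) : Set C₁)) := hc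
      have hγmem : γ c ∈ closure (((⊥ : AddSubgroup C₂) : Set C₂)) := by
        refine map_mem_closure hγc hc' ?_
        rintro x hx
        have : x = 0 := by simpa using hx
        simp [this]
      show φ c = 0
      simp only [hφ, AddMonoidHom.comp_apply, QuotientAddGroup.mk'_apply]
      rw [QuotientAddGroup.eq_zero_iff]
      exact hγmem
    refine ⟨QuotientAddGroup.lift N₁ φ hker, ?_, ?_, ?_⟩
    · intro c; rfl
    · rw [(QuotientAddGroup.isQuotientMap_mk N₁).continuous_iff]
      exact continuous_quotient_mk'.comp hγc
    · intro y
      obtain ⟨c₂, rfl⟩ := QuotientAddGroup.mk'_surjective N₂ y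
      obtain ⟨c₁, rfl⟩ := hγsurj c₂
      exact ⟨QuotientAddGroup.mk c₁, rfl⟩
  · intro _
    exact ⟨hγc, hγinj, hγsurj⟩
end
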